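/- arXiv:0908.2140 — 5 statements merged into one kernel-verified Lean document; each statement's English description precedes it below -/
import Mathlib

section
/- Let p be an odd prime and let τ = (1 2 … p) be a p-cycle in the alternating group A_p. Then the number of Sylow p-subgroups of A_p equals (p-2)!. -/
/-!
If `p` divides `|G|` exactly once, the Sylow `p`-subgroups have order `p`, and every element of
order `p` lies in exactly one of them (the one it generates); hence `n_p * (p - 1)` is the number
of elements of order `p`. In `A_p` these are the `p`-cycles, all even as `p` is odd, and there are
`(p - 1)!` of them, so `n_p = (p - 2)!`.
-/

open Equiv Equiv.Perm Nat

theorem Nat.factorization_factorial_eq_one {p n : ℕ} (hp : p.Prime) (hpn : p ≤ n)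
    (hn : n < 2 * p) : (n !).factorization p = 1 := by
  have hlog : log p n < 2 := log_lt_of_lt_pow' two_ne_zero (by nlinarith [hp.two_le])
  rw [factorization_factorial hp hlog, Finset.sum_Ico_succ_top le_rfl, Finset.Ico_self,
    Finset.sum_empty, zero_add, pow_one]
  exact Nat.div_eq_of_lt_le (by omega) (by omega)

theorem orderOf_eq_prime_of_card_eq {G : Type*} [Group G] {p : ℕ} [Fact p.Prime]
    (hG : Nat.card G = p) {g : G} (hg : g ≠ 1) : orderOf g = p :=
  orderOf_eq_prime (hG ▸ pow_card_eq_one') hg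

theorem Subgroup.eq_zpowers_of_card_eq_prime {G : Type*} [Group G] {p : ℕ} [Fact p.Prime]
    {H : Subgroup G} (hH : Nat.card H = p) (h : H) (hh : h ≠ 1) : H = zpowers (h : G) := by
  have : Finite H := Nat.finite_of_card_ne_zero (hH ▸ (Fact.out : p.Prime).ne_zero)
  refine (eq_of_le_of_card_ge (zpowers_le.mpr h.2) ?_).symm
  rw [Nat.card_zpowers, orderOf_coe, orderOf_eq_prime_of_card_eq hH hh, hH]

namespace Sylow

variable {G : Type*} [Group G] [Finite G] {p : ℕ} [Fact p.Prime]

theorem card_mul_sub_one_eq_card_orderOf_eq (hG : (Nat.card G).factorization p = 1) :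
    Nat.card (Sylow p G) * (p - 1) = Nat.card {g : G // orderOf g = p} := by
  have hP (P : Sylow p G) : Nat.card P = p := by rw [P.card_eq_multiplicity, hG, pow_one]
  let f (x : Σ P : Sylow p G, {h : (P : Subgroup G) // h ≠ 1}) : {g : G // orderOf g = p} :=
    ⟨x.2.1, by rw [Subgroup.orderOf_coe, orderOf_eq_prime_of_card_eq (hP x.1) x.2.2]⟩
  have hf : Function.Bijective f := by
    constructor
    · rintro ⟨P, h, hh⟩ ⟨Q, k, hk⟩ hhk
      have hhk : (h : G) = k := congrArg Subtype.val hhk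
      obtain rfl : P = Q := Sylow.ext <| by
        rw [Subgroup.eq_zpowers_of_card_eq_prime (hP P) h hh,
          Subgroup.eq_zpowers_of_card_eq_prime (hP Q) k hk, hhk]
      obtain rfl : h = k := Subtype.ext hhk
      rfl
    · rintro ⟨g, hg⟩
      obtain ⟨P, hle⟩ := (IsPGroup.of_card (n := 1) (by rw [Nat.card_zpowers, hg, pow_one])
        : IsPGroup p (Subgroup.zpowers g)).exists_le_sylow
      have hg1 : g ≠ 1 := by
        rintro rfl
        exact (Fact.out : p.Prime).one_lt.ne (orderOf_one.symm.trans hg)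
      exact ⟨⟨P, ⟨g, hle (Subgroup.mem_zpowers g)⟩,
        fun h ↦ hg1 (congrArg Subtype.val h)⟩, rfl⟩
  have := Fintype.ofFinite (Sylow p G)
  have hcard_ne_one (P : Sylow p G) : Nat.card {h : (P : Subgroup G) // h ≠ 1} = p - 1 := by
    classical
    have := Fintype.ofFinite P
    rw [Nat.card_eq_fintype_card, Fintype.card_subtype_compl, Fintype.card_subtype_eq,
      ← Nat.card_eq_fintype_card, hP]
  rw [← Nat.card_eq_of_bijective f hf, Nat.card_sigma]
  simp [hcard_ne_one]

end Sylow

theorem Equiv.Perm.orderOf_eq_prime_iff_cycleType_eq_singleton {α : Type*} [Fintype α]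
    [DecidableEq α] {σ : Perm α} {p : ℕ} (hp : p.Prime) (hα : Fintype.card α < 2 * p) :
    orderOf σ = p ↔ σ.cycleType = {p} := by
  constructor
  · intro hσ
    have hc : σ.IsCycle := isCycle_of_prime_order' (hσ ▸ hp) (hσ ▸ hα)
    rw [hc.cycleType, ← hc.orderOf, hσ]
  · intro hσ
    rw [← lcm_cycleType, hσ, Multiset.lcm_singleton, normalize_eq]

theorem card_orderOf_eq_prime_alternatingGroup {α : Type*} [Fintype α] [DecidableEq α] {p : ℕ}
    (hp : p.Prime) (hodd : Odd p) (hpα : p ≤ Fintype.card α) (hα : Fintype.card α < 2 * p) :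
    Nat.card {g : alternatingGroup α // orderOf g = p} =
      (p - 1)! * (Fintype.card α).choose p := by
  have hcount := AlternatingGroup.card_of_cycleType_singleton hp.two_le hpα
  rw [if_pos hodd] at hcount
  rw [← hcount, Nat.card_eq_fintype_card, ← Fintype.card_subtype]
  simp only [← Subgroup.orderOf_coe, orderOf_eq_prime_iff_cycleType_eq_singleton hp hα]

theorem factorization_card_alternatingGroup {α : Type*} [Fintype α] [DecidableEq α] {p : ℕ}
    (hp : p.Prime) (hp2 : p ≠ 2) (hpα : p ≤ Fintype.card α) (hα : Fintype.card α < 2 * p) :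
    (Nat.card (alternatingGroup α)).factorization p = 1 := by
  have : Nontrivial α := Fintype.one_lt_card_iff_nontrivial.mp (by linarith [hp.two_le])
  have h2 : (2 : ℕ).factorization p = 0 :=
    factorization_eq_zero_of_not_dvd fun h ↦ hp2 ((prime_dvd_prime_iff_eq hp prime_two).mp h)
  calc (Nat.card (alternatingGroup α)).factorization p
      = (2 * Nat.card (alternatingGroup α)).factorization p := by
        rw [Nat.factorization_mul two_ne_zero Nat.card_pos.ne', Finsupp.add_apply, h2, zero_add]
    _ = (Fintype.card α)!.factorization p := by
        rw [two_mul_nat_card_alternatingGroup, Nat.card_perm, Nat.card_eq_fintype_card]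
    _ = 1 := factorization_factorial_eq_one hp hpα hα

/-- For an odd prime `p`, the number of Sylow `p`-subgroups of the
alternating group `A_p` equals `(p-2)!`. -/
theorem sylow_card_alternatingGroup (p : ℕ) (hp : p.Prime) (hodd : Odd p) :
    Nat.card (Sylow p (alternatingGroup (Fin p))) = Nat.factorial (p - 2) := by
  have : Fact p.Prime := ⟨hp⟩
  have hp_two := hp.two_le
  have hp2 : p ≠ 2 := by rintro rfl; exact absurd hodd (by decide)
  have hp_le : p ≤ Fintype.card (Fin p) := (Fintype.card_fin p).ge
  have hlt : Fintype.card (Fin p) < 2 * p := by rw [Fintype.card_fin]; omega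
  have hcount : Nat.card (Sylow p (alternatingGroup (Fin p))) * (p - 1) = (p - 1)! := by
    rw [Sylow.card_mul_sub_one_eq_card_orderOf_eq
        (factorization_card_alternatingGroup hp hp2 hp_le hlt),
      card_orderOf_eq_prime_alternatingGroup hp hodd hp_le hlt, Fintype.card_fin, choose_self,
      mul_one]
  rw [← mul_factorial_pred (n := p - 1) (by omega), Nat.sub_sub, mul_comm] at hcount
  exact Nat.eq_of_mul_eq_mul_left (by omega) hcount
end

section
/- Let p ≥ 5 be prime and let τ = (1 2 … p) be a p-cycle in A_p. Then the normalizer N_{A_p}(⟨τ⟩) has order p(p-1)/2. -/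
/-!
A full cycle is self-centralising in the symmetric group, and every automorphism of `⟨τ⟩` is
induced by a conjugation, because all generators of `⟨τ⟩` are cycles with the same support as
`τ`. Hence `N_{S_p}(⟨τ⟩) → Aut ⟨τ⟩` is onto with kernel `⟨τ⟩`, and `|N_{S_p}(⟨τ⟩)| = p (p - 1)`.
Since `⟨τ⟩` is a Sylow `p`-subgroup of `S_p` contained in the normal subgroup `A_p`, the Frattini
argument gives `N_{S_p}(⟨τ⟩) A_p = S_p`, so `N_{A_p}(⟨τ⟩)` has index `[S_p : A_p] = 2` in
`N_{S_p}(⟨τ⟩)`.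
-/

open Equiv Equiv.Perm Subgroup

namespace Subgroup

variable {G : Type*} [Group G]

theorem normalizerMonoidHom_zpowers_surjective {g : G}
    (hconj : ∀ w : G, zpowers w = zpowers g → IsConj g w) :
    Function.Surjective (zpowers g).normalizerMonoidHom := by
  intro ψ
  set t : zpowers g := ⟨g, mem_zpowers g⟩
  set w : G := ↑(ψ t)
  have hw : zpowers w = zpowers g := by
    refine le_antisymm (zpowers_le.mpr (ψ t).2) (zpowers_le.mpr ?_)
    obtain ⟨m, hm⟩ := mem_zpowers_iff.mp (ψ.symm t).2
    have hm' : t ^ m = ψ.symm t := Subtype.ext hm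
    have hgen : ψ t ^ m = t := by rw [← map_zpow, hm', ψ.apply_symm_apply]
    exact ⟨m, congrArg Subtype.val hgen⟩
  obtain ⟨σ, hσ⟩ := isConj_iff.mp (hconj w hw)
  have hσN : σ ∈ normalizer (zpowers g : Set G) := by
    rw [mem_normalizer_iff_map_conj_eq, MonoidHom.map_zpowers]
    change zpowers (σ * g * σ⁻¹) = zpowers g
    rw [hσ, hw]
  refine ⟨⟨σ, hσN⟩, MulEquiv.ext fun h => ?_⟩
  obtain ⟨m, hm⟩ := mem_zpowers_iff.mp h.2
  obtain rfl : t ^ m = h := Subtype.ext hm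
  rw [map_zpow, map_zpow]
  congr 1
  exact Subtype.ext hσ

theorem nat_card_normalizer_zpowers [Finite G] {g : G}
    (hconj : ∀ w : G, zpowers w = zpowers g → IsConj g w) :
    Nat.card (normalizer (zpowers g : Set G)) =
      Nat.card (centralizer (zpowers g : Set G)) * (orderOf g).totient := by
  set φ := (zpowers g).normalizerMonoidHom
  have hker : Nat.card φ.ker = Nat.card (centralizer (zpowers g : Set G)) := by
    rw [normalizerMonoidHom_ker]
    exact Nat.card_congr (subgroupOfEquivOfLe (centralizer_le_normalizer _)).toEquiv
  have hrange : Nat.card (_ ⧸ φ.ker) = (orderOf g).totient := by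
    rw [Nat.card_congr (QuotientGroup.quotientKerEquivOfSurjective φ
      (normalizerMonoidHom_zpowers_surjective hconj)).toEquiv, IsCyclic.card_mulAut,
      Nat.card_zpowers]
  rw [card_eq_card_quotient_mul_card_subgroup φ.ker, hrange, hker, mul_comm]

end Subgroup

namespace Equiv.Perm

variable {α : Type*} [Fintype α] [DecidableEq α] {τ : Perm α}

theorem IsCycle.isConj_of_zpowers_eq (hτ : τ.IsCycle) {w : Perm α}
    (h : zpowers w = zpowers τ) : IsConj τ w := by
  obtain ⟨j, hj⟩ := mem_zpowers_iff.mp (h ▸ mem_zpowers τ : τ ∈ zpowers w)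
  obtain ⟨k, hk⟩ := mem_zpowers_iff.mp (h ▸ mem_zpowers w : w ∈ zpowers τ)
  have hsupp : w.support = τ.support :=
    le_antisymm (hk ▸ support_zpow_le τ k) (hj ▸ support_zpow_le w j)
  have hw : w.IsCycle := (hj ▸ hτ).of_zpow (hj ▸ hsupp.le)
  exact hτ.isConj hw (by rw [hsupp])

theorem IsCycle.nat_card_centralizer_zpowers (hτ : τ.IsCycle)
    (hsupp : τ.support.card = Fintype.card α) :
    Nat.card (centralizer (zpowers τ : Set (Perm α))) = Fintype.card α := by
  rw [zpowers_eq_closure, centralizer_closure, nat_card_centralizer, hτ.cycleType, hsupp]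
  simp

theorem IsCycle.nat_card_normalizer_zpowers (hτ : τ.IsCycle)
    (hsupp : τ.support.card = Fintype.card α) :
    Nat.card (normalizer (zpowers τ : Set (Perm α))) =
      Fintype.card α * (Fintype.card α).totient := by
  rw [Subgroup.nat_card_normalizer_zpowers fun _ => hτ.isConj_of_zpowers_eq,
    hτ.nat_card_centralizer_zpowers hsupp, hτ.orderOf, hsupp]

theorem not_dvd_index_of_nat_card_eq {p : ℕ} (hp : p.Prime)
    {K : Subgroup (Perm (Fin p))} (hK : Nat.card K = p) : ¬ p ∣ K.index := by
  have hfac : p * K.index = p * (p - 1).factorial :=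
    calc p * K.index = Nat.card (Perm (Fin p)) := by rw [← card_mul_index K, hK]
      _ = p * (p - 1).factorial := by
        rw [Nat.card_eq_fintype_card, Fintype.card_perm, Fintype.card_fin,
          Nat.mul_factorial_pred hp.ne_zero]
  rw [Nat.eq_of_mul_eq_mul_left hp.pos hfac, hp.dvd_factorial]
  exact Nat.not_le_of_lt (Nat.sub_one_lt hp.ne_zero)

end Equiv.Perm

namespace Sylow

variable {G : Type*} [Group G] [Finite G] {p : ℕ} [Fact p.Prime]

theorem nat_card_normalizer_subgroupOf_mul_index {H : Subgroup G} [H.Normal] (P : Sylow p G)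
    (hP : (P : Subgroup G) ≤ H) :
    Nat.card (normalizer ((P : Subgroup G).subgroupOf H : Set H)) * H.index =
      Nat.card (normalizer ((P : Subgroup G) : Set G)) := by
  set N := normalizer ((P : Subgroup G) : Set G)
  have hindex : H.relIndex N = H.index := by
    have hsup : N ⊔ H = ⊤ := P.normalizer_sup_eq_top' hP
    rw [← relIndex_sup_right, hsup, relIndex_top_right]
  have hcard : Nat.card (N.subgroupOf H) = Nat.card (H.subgroupOf N) := by
    rw [← inf_subgroupOf_right, ← inf_subgroupOf_right H, inf_comm,
      Nat.card_congr (subgroupOfEquivOfLe inf_le_left).toEquiv,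
      Nat.card_congr (subgroupOfEquivOfLe inf_le_right).toEquiv]
  rw [← subgroupOf_normalizer_eq hP, hcard, ← hindex]
  exact card_mul_index _

end Sylow

theorem card_normalizer_alternatingGroup_general (p : ℕ) (hp : p.Prime)
    (τ : Equiv.Perm (Fin p)) (hcyc : τ.IsCycle) (hcard : τ.support.card = p)
    (hτA : τ ∈ alternatingGroup (Fin p)) :
    Nat.card (Subgroup.normalizer
      ((Subgroup.zpowers (⟨τ, hτA⟩ : alternatingGroup (Fin p))) : Set (alternatingGroup (Fin p)))) = p * (p - 1) / 2 := by
  have : Fact p.Prime := ⟨hp⟩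
  have : Nontrivial (Fin p) := Fin.nontrivial_iff_two_le.mpr hp.two_le
  have hτp : Nat.card (zpowers τ) = p := by rw [Nat.card_zpowers, hcyc.orderOf, hcard]
  let P : Sylow p (Perm (Fin p)) :=
    (IsPGroup.of_card (hτp.trans (pow_one p).symm)).toSylow (not_dvd_index_of_nat_card_eq hp hτp)
  have hPA : (P : Subgroup (Perm (Fin p))) ≤ alternatingGroup (Fin p) := zpowers_le.mpr hτA
  have hzp : zpowers (⟨τ, hτA⟩ : alternatingGroup (Fin p)) =
      (P : Subgroup (Perm (Fin p))).subgroupOf (alternatingGroup (Fin p)) := by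
    rw [IsPGroup.toSylow_coe, subgroupOf, ← comap_map_eq_self_of_injective (subtype_injective _)
      (zpowers _), MonoidHom.map_zpowers]
    rfl
  have hfrattini := P.nat_card_normalizer_subgroupOf_mul_index hPA
  rw [← hzp, alternatingGroup.index_eq_two, IsPGroup.toSylow_coe,
    hcyc.nat_card_normalizer_zpowers (by rw [hcard, Fintype.card_fin]), Fintype.card_fin,
    Nat.totient_prime hp] at hfrattini
  rw [← hfrattini, Nat.mul_div_cancel _ two_pos]

/-- For a prime `p ≥ 5` and a `p`-cycle `τ ∈ A_p`, the normalizer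
`N_{A_p}(⟨τ⟩)` has order `p(p-1)/2`. -/
theorem card_normalizer_alternatingGroup (p : ℕ) (hp : p.Prime) (hp5 : 5 ≤ p)
    (τ : Equiv.Perm (Fin p)) (hcyc : τ.IsCycle) (hcard : τ.support.card = p)
    (hτA : τ ∈ alternatingGroup (Fin p)) :
    Nat.card (Subgroup.normalizer
      ((Subgroup.zpowers (⟨τ, hτA⟩ : alternatingGroup (Fin p))) : Set (alternatingGroup (Fin p)))) = p * (p - 1) / 2 :=
  card_normalizer_alternatingGroup_general p hp τ hcyc hcard hτA
end

section
/- Let p ≥ 5 be prime and τ = (1 2 … p) a p-cycle in A_p. There exists β ∈ A_p of order (p-1)/2 normalizing ⟨τ⟩ such that N_{A_p}(⟨τ⟩) = ⟨τ⟩ ⋊ ⟨β⟩, i.e. N_{A_p}(⟨τ⟩) is generated by τ and β, ⟨τ⟩ ∩ ⟨β⟩ = 1, and ⟨τ⟩ is normal in N_{A_p}(⟨τ⟩). -/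
/-!
In coordinates `e : ZMod p ≃ Fin p` the `p`-cycle `τ` becomes `x ↦ x + 1`. A permutation `σ`
normalizing `⟨τ⟩` conjugates `τ` to some `τ ^ a` with `a ≠ 0`, as does the multiplication map
`θ_a : x ↦ a x`; hence `θ_a⁻¹ σ` centralizes `τ` and lies in `⟨τ⟩`, so
`N_{S_p}(⟨τ⟩) = ⟨τ⟩ ⋊ {θ_a}`. For a primitive root `g`, `θ_g` is a `(p - 1)`-cycle, hence odd,
so `θ_a` is even exactly when `a` is a power of `g ^ 2`. The even part of the normalizer is
therefore `⟨τ⟩ ⋊ ⟨β⟩` with `β = θ_{g²}` of order `(p - 1) / 2`, which is coprime to `p`.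
-/

open Equiv Equiv.Perm Subgroup Finset

theorem mem_zpowers_sq_of_map_eq_one {G : Type*} [Group G] {u : G} (hu : ∀ a, a ∈ zpowers u)
    {χ : G →* ℤˣ} (hχ : χ u = -1) {a : G} (ha : χ a = 1) : a ∈ zpowers (u ^ 2) := by
  obtain ⟨k, rfl⟩ := mem_zpowers_iff.mp (hu a)
  rw [map_zpow, hχ] at ha
  obtain ⟨m, rfl⟩ : Even k := by
    by_contra hk
    rw [(Int.not_even_iff_odd.mp hk).neg_one_zpow] at ha
    exact absurd ha (by decide)
  exact mem_zpowers_iff.mpr ⟨m, by rw [← zpow_natCast, ← zpow_mul]; push_cast; ring_nf⟩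

namespace Subgroup

variable {G : Type*} [Group G]

theorem coe_mem_zpowers_iff {H : Subgroup G} {x t : H} :
    (x : G) ∈ zpowers (t : G) ↔ x ∈ zpowers t := by
  simp only [mem_zpowers_iff, ← coe_zpow, Subtype.coe_inj]

theorem mem_normalizer_zpowers_iff [Finite G] {t x : G} :
    x ∈ normalizer (zpowers t : Set G) ↔ x * t * x⁻¹ ∈ zpowers t := by
  refine ⟨fun hx => (mem_normalizer_iff.mp hx t).mp (mem_zpowers t), fun hx => ?_⟩
  refine mem_normalizer_fintype fun y hy => ?_
  obtain ⟨k, rfl⟩ := mem_zpowers_iff.mp hy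
  rw [← conj_zpow]
  exact zpow_mem hx k

theorem normalizer_zpowers_eq_sup [Finite G] {t b : G} (hb : b * t * b⁻¹ ∈ zpowers t)
    (h : ∀ x, x * t * x⁻¹ ∈ zpowers t → ∃ m j : ℤ, x = b ^ m * t ^ j) :
    normalizer (zpowers t : Set G) = zpowers t ⊔ zpowers b := by
  refine le_antisymm (fun x hx => ?_)
    (sup_le le_normalizer (zpowers_le.mpr (mem_normalizer_zpowers_iff.mpr hb)))
  obtain ⟨m, j, rfl⟩ := h x (mem_normalizer_zpowers_iff.mp hx)
  exact mul_mem (mem_sup_right (zpow_mem (mem_zpowers b) m))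
    (mem_sup_left (zpow_mem (mem_zpowers t) j))

end Subgroup

namespace ZMod

variable {p : ℕ} [Fact p.Prime] {u : (ZMod p)ˣ}

theorem orderOf_sq_of_forall_mem_zpowers (hp2 : p ≠ 2) (hu : ∀ a, a ∈ zpowers u) :
    orderOf (u ^ 2) = (p - 1) / 2 := by
  rw [orderOf_pow' u two_ne_zero, orderOf_eq_card_of_forall_mem_zpowers hu,
    Nat.card_eq_fintype_card, ZMod.card_units,
    Nat.gcd_eq_right ((Fact.out : p.Prime).even_sub_one hp2).two_dvd]

theorem support_toPerm_unit (hu : u ≠ 1) :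
    (MulAction.toPerm u : Perm (ZMod p)).support = {0}ᶜ := by
  ext k
  simp only [mem_support, MulAction.toPerm_apply, Units.smul_def, mem_compl, mem_singleton,
    not_iff_not]
  constructor
  · intro h
    by_contra hk
    exact hu (Units.val_eq_one.mp ((mul_eq_right₀ hk).mp h))
  · rintro rfl
    exact mul_zero _

theorem isCycle_toPerm_of_forall_mem_zpowers (hu : ∀ a, a ∈ zpowers u) (hu1 : u ≠ 1) :
    (MulAction.toPerm u : Perm (ZMod p)).IsCycle := by
  refine ⟨1, ?_, fun k hk => ?_⟩
  · rw [← mem_support, support_toPerm_unit hu1]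
    simp
  · rw [← mem_support, support_toPerm_unit hu1, mem_compl, mem_singleton] at hk
    obtain ⟨m, hm⟩ := mem_zpowers_iff.mp (hu (Units.mk0 k hk))
    refine ⟨m, ?_⟩
    change (MulAction.toPermHom (ZMod p)ˣ (ZMod p) u ^ m) 1 = k
    rw [← map_zpow, hm]
    simp [Units.smul_def]

theorem sign_toPerm_of_forall_mem_zpowers (hp2 : p ≠ 2) (hu : ∀ a, a ∈ zpowers u) :
    sign (MulAction.toPerm u : Perm (ZMod p)) = -1 := by
  have hp := (Fact.out : p.Prime)
  have hu1 : u ≠ 1 := by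
    rintro rfl
    have := orderOf_eq_card_of_forall_mem_zpowers hu
    rw [orderOf_one, Nat.card_eq_fintype_card, ZMod.card_units] at this
    have := hp.two_le
    omega
  rw [(isCycle_toPerm_of_forall_mem_zpowers hu hu1).sign, support_toPerm_unit hu1, card_compl,
    card_singleton, ZMod.card, (hp.even_sub_one hp2).neg_one_pow]

end ZMod

namespace Equiv.Perm

variable {α : Type*} {n : ℕ} {τ : Perm α}

theorem IsCycle.odd_card_support [Fintype α] [DecidableEq α] (hτ : τ.IsCycle)
    (h : τ ∈ alternatingGroup α) : Odd #τ.support := by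
  rw [mem_alternatingGroup, hτ.sign, neg_eq_iff_eq_neg] at h
  exact (neg_one_pow_eq_neg_one_iff_odd (R := ℤˣ) (by decide)).mp h

theorem IsCycle.exists_zmod_equiv [Fintype α] [DecidableEq α] [NeZero n] (hτ : τ.IsCycle)
    (hs : #τ.support = n) (hα : Fintype.card α = n) :
    ∃ e : ZMod n ≃ α, ∀ k, τ (e k) = e (k + 1) := by
  have hord : orderOf τ = n := hτ.orderOf.trans hs
  have huniv : τ.support = univ := eq_univ_of_card _ (hs.trans hα.symm)
  obtain ⟨x₀, hx₀⟩ := hτ.nonempty_support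
  have hpow : ∀ a b : ℕ, (a : ZMod n) = b → τ ^ a = τ ^ b := fun a b h =>
    pow_eq_pow_iff_modEq.mpr (by rw [hord]; exact (ZMod.natCast_eq_natCast_iff _ _ _).mp h)
  let f : ZMod n → α := fun k => (τ ^ k.val) x₀
  have hf : ∀ k, τ (f k) = f (k + 1) := fun k => by
    simp only [f, ← Perm.mul_apply, ← pow_succ']
    rw [hpow (k.val + 1) (k + 1).val (by simp)]
  have hsurj : Function.Surjective f := fun y => by
    obtain ⟨i, hi⟩ := hτ.exists_pow_eq (mem_support.mp hx₀)
      (mem_support.mp (huniv ▸ mem_univ y))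
    exact ⟨i, by simp only [f]; rw [hpow (i : ZMod n).val i (by simp), hi]⟩
  have hbij : Function.Bijective f :=
    (Fintype.bijective_iff_surjective_and_card f).mpr ⟨hsurj, by simp [hα]⟩
  exact ⟨.ofBijective f hbij, hf⟩

def coordMul (e : ZMod n ≃ α) : (ZMod n)ˣ →* Perm α :=
  e.permCongrHom.toMonoidHom.comp (MulAction.toPermHom (ZMod n)ˣ (ZMod n))

@[simp]
theorem coordMul_apply (e : ZMod n ≃ α) (a : (ZMod n)ˣ) (k : ZMod n) :
    coordMul e a (e k) = e (a * k) := by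
  simp [coordMul, Equiv.permCongrHom_coe, Equiv.permCongr_apply, Units.smul_def]

theorem coordMul_injective (e : ZMod n ≃ α) : Function.Injective (coordMul e) := by
  refine (injective_iff_map_eq_one _).mpr fun a ha => Units.ext ?_
  simpa using congrArg e.symm (DFunLike.congr_fun ha (e 1))

theorem sign_coordMul_of_forall_mem_zpowers [Fintype α] [DecidableEq α] {p : ℕ} [Fact p.Prime]
    (e : ZMod p ≃ α) (hp2 : p ≠ 2) {u : (ZMod p)ˣ} (hu : ∀ a, a ∈ zpowers u) :
    sign (coordMul e u) = -1 :=
  (sign_permCongr e _).trans (ZMod.sign_toPerm_of_forall_mem_zpowers hp2 hu)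

variable {e : ZMod n ≃ α}

theorem zpow_apply_of_coord (he : ∀ k, τ (e k) = e (k + 1)) (z : ℤ) (k : ZMod n) :
    (τ ^ z) (e k) = e (k + z) := by
  induction z using Int.induction_on generalizing k with
  | zero => simp
  | succ z ih => rw [zpow_add_one, Perm.mul_apply, he, ih]; push_cast; ring_nf
  | pred z ih =>
    have hinv : τ⁻¹ (e k) = e (k - 1) := Perm.inv_eq_iff_eq.mpr (by rw [he, sub_add_cancel])
    rw [zpow_sub_one, Perm.mul_apply, hinv, ih]; push_cast; ring_nf

theorem mem_zpowers_of_commute (he : ∀ k, τ (e k) = e (k + 1)) {g : Perm α}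
    (hg : Commute g τ) : g ∈ zpowers τ := by
  obtain ⟨j, hj⟩ := ZMod.intCast_surjective (e.symm (g (e 0)))
  refine ⟨j, Equiv.ext fun x => ?_⟩
  obtain ⟨m, rfl⟩ : ∃ m : ℤ, e m = x := ⟨(e.symm x).cast, by simp⟩
  calc (τ ^ j) (e m) = (τ ^ m) (e j) := by
        rw [zpow_apply_of_coord he, zpow_apply_of_coord he, add_comm]
    _ = (τ ^ m) (g (e 0)) := by rw [hj, e.apply_symm_apply]
    _ = g ((τ ^ m) (e 0)) := by rw [← Perm.mul_apply, ← (hg.zpow_right m).eq, Perm.mul_apply]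
    _ = g (e m) := by rw [zpow_apply_of_coord he, zero_add]

theorem coordMul_conj (he : ∀ k, τ (e k) = e (k + 1)) {a : (ZMod n)ˣ} {z : ℤ}
    (hz : (z : ZMod n) = a) : coordMul e a * τ * (coordMul e a)⁻¹ = τ ^ z := by
  ext x
  obtain ⟨k, rfl⟩ := e.surjective x
  rw [← map_inv, Perm.mul_apply, Perm.mul_apply, coordMul_apply, he, coordMul_apply,
    zpow_apply_of_coord he, hz, mul_add, ← mul_assoc, Units.mul_inv, one_mul, mul_one]

theorem exists_eq_coordMul_mul_zpow {p : ℕ} [Fact p.Prime] {e : ZMod p ≃ α}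
    (he : ∀ k, τ (e k) = e (k + 1)) {σ : Perm α} (hσ : σ * τ * σ⁻¹ ∈ zpowers τ) :
    ∃ (a : (ZMod p)ˣ) (j : ℤ), σ = coordMul e a * τ ^ j := by
  obtain ⟨z, hz⟩ := mem_zpowers_iff.mp hσ
  have hz0 : (z : ZMod p) ≠ 0 := by
    intro h0
    have hτz : τ ^ z = 1 := Equiv.ext fun x => by
      obtain ⟨k, rfl⟩ := e.surjective x
      rw [zpow_apply_of_coord he, h0, add_zero, Perm.one_apply]
    rw [hτz, eq_comm, mul_inv_eq_one, mul_eq_left] at hz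
    simpa [hz] using he 0
  set θ := coordMul e (Units.mk0 _ hz0)
  have hθ : θ * τ * θ⁻¹ = σ * τ * σ⁻¹ := by
    rw [coordMul_conj he (Units.val_mk0 hz0).symm, hz]
  have hcomm : Commute (θ⁻¹ * σ) τ := by
    calc θ⁻¹ * σ * τ = θ⁻¹ * (σ * τ * σ⁻¹) * σ := by group
      _ = θ⁻¹ * (θ * τ * θ⁻¹) * σ := by rw [hθ]
      _ = τ * (θ⁻¹ * σ) := by group
  obtain ⟨j, hj⟩ := mem_zpowers_iff.mp (mem_zpowers_of_commute he hcomm)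
  exact ⟨Units.mk0 _ hz0, j, by rw [hj, mul_inv_cancel_left]⟩

theorem exists_eq_coordMul_sq_zpow_mul_zpow [Fintype α] [DecidableEq α] {p : ℕ} [Fact p.Prime]
    (hp2 : p ≠ 2) {e : ZMod p ≃ α} (he : ∀ k, τ (e k) = e (k + 1)) {u : (ZMod p)ˣ}
    (hu : ∀ a, a ∈ zpowers u) (hτ : τ ∈ alternatingGroup α) {σ : Perm α}
    (hσ : σ * τ * σ⁻¹ ∈ zpowers τ) (hσA : σ ∈ alternatingGroup α) :
    ∃ m j : ℤ, σ = coordMul e (u ^ 2) ^ m * τ ^ j := by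
  obtain ⟨a, j, rfl⟩ := exists_eq_coordMul_mul_zpow he hσ
  rw [mem_alternatingGroup, map_mul, map_zpow, mem_alternatingGroup.mp hτ, one_zpow,
    mul_one] at hσA
  obtain ⟨m, rfl⟩ := mem_zpowers_iff.mp <| mem_zpowers_sq_of_map_eq_one hu
    (χ := sign.comp (coordMul e)) (sign_coordMul_of_forall_mem_zpowers e hp2 hu) hσA
  exact ⟨m, j, by rw [map_zpow]⟩

end Equiv.Perm

theorem normalizer_eq_semidirect_general (p : ℕ) (hp : p.Prime)
    (τ : Equiv.Perm (Fin p)) (hcyc : τ.IsCycle) (hcard : τ.support.card = p)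
    (hτA : τ ∈ alternatingGroup (Fin p)) :
    ∃ β : alternatingGroup (Fin p),
      orderOf β = (p - 1) / 2 ∧
      β ∈ Subgroup.normalizer (Subgroup.zpowers (⟨τ, hτA⟩ : alternatingGroup (Fin p))) ∧
      Subgroup.normalizer (Subgroup.zpowers (⟨τ, hτA⟩ : alternatingGroup (Fin p)))
        = Subgroup.zpowers (⟨τ, hτA⟩ : alternatingGroup (Fin p)) ⊔ Subgroup.zpowers β ∧
      Subgroup.zpowers (⟨τ, hτA⟩ : alternatingGroup (Fin p)) ⊓ Subgroup.zpowers β = ⊥ ∧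
      ((Subgroup.zpowers (⟨τ, hτA⟩ : alternatingGroup (Fin p))).subgroupOf
        (Subgroup.normalizer (Subgroup.zpowers (⟨τ, hτA⟩ : alternatingGroup (Fin p))))).Normal := by
  have := Fact.mk hp
  have hp2 : p ≠ 2 := by
    rintro rfl
    exact Nat.not_odd_iff_even.mpr even_two (hcard ▸ hcyc.odd_card_support hτA)
  obtain ⟨e, he⟩ := hcyc.exists_zmod_equiv hcard (Fintype.card_fin p)
  obtain ⟨u, hu⟩ := IsCyclic.exists_generator (α := (ZMod p)ˣ)
  have hθA : coordMul e (u ^ 2) ∈ alternatingGroup (Fin p) := by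
    rw [mem_alternatingGroup, map_pow, map_pow, sign_coordMul_of_forall_mem_zpowers e hp2 hu]
    decide
  set τA : alternatingGroup (Fin p) := ⟨τ, hτA⟩
  set β : alternatingGroup (Fin p) := ⟨_, hθA⟩
  have hβ : β * τA * β⁻¹ ∈ zpowers τA := by
    rw [← coe_mem_zpowers_iff]
    exact ⟨_, (coordMul_conj he (z := ((u ^ 2 : (ZMod p)ˣ) : ZMod p).val) (by simp)).symm⟩
  have hN := normalizer_zpowers_eq_sup hβ fun x hx => by
    obtain ⟨m, j, hmj⟩ := exists_eq_coordMul_sq_zpow_mul_zpow hp2 he hu hτA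
      (coe_mem_zpowers_iff.mpr hx) x.2
    exact ⟨m, j, Subtype.ext (by simp only [Subgroup.coe_mul, Subgroup.coe_zpow]; exact hmj)⟩
  have hβord : orderOf β = (p - 1) / 2 := by
    rw [← orderOf_coe, orderOf_injective _ (coordMul_injective e),
      ZMod.orderOf_sq_of_forall_mem_zpowers hp2 hu]
  refine ⟨β, hβord, hN ▸ mem_sup_right (mem_zpowers β), hN,
    disjoint_iff.mp (disjoint_of_coprime_natCard ?_), normal_in_normalizer⟩
  rw [Nat.card_zpowers, Nat.card_zpowers, hβord, ← orderOf_coe, hcyc.orderOf, hcard]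
  have := hp.two_le
  exact Nat.coprime_of_lt_prime (by omega) (by omega) hp

/-- For a prime `p ≥ 5` and a `p`-cycle `τ ∈ A_p`, there exists
`β ∈ A_p` of order `(p-1)/2` normalizing `⟨τ⟩` with
`N_{A_p}(⟨τ⟩) = ⟨τ⟩ ⋊ ⟨β⟩`: the normalizer is generated by `τ` and `β`,
`⟨τ⟩ ∩ ⟨β⟩ = 1`, and `⟨τ⟩` is normal in the normalizer. -/
theorem normalizer_eq_semidirect (p : ℕ) (hp : p.Prime) (hp5 : 5 ≤ p)
    (τ : Equiv.Perm (Fin p)) (hcyc : τ.IsCycle) (hcard : τ.support.card = p)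
    (hτA : τ ∈ alternatingGroup (Fin p)) :
    ∃ β : alternatingGroup (Fin p),
      orderOf β = (p - 1) / 2 ∧
      β ∈ Subgroup.normalizer (Subgroup.zpowers (⟨τ, hτA⟩ : alternatingGroup (Fin p))) ∧
      Subgroup.normalizer (Subgroup.zpowers (⟨τ, hτA⟩ : alternatingGroup (Fin p)))
        = Subgroup.zpowers (⟨τ, hτA⟩ : alternatingGroup (Fin p)) ⊔ Subgroup.zpowers β ∧
      Subgroup.zpowers (⟨τ, hτA⟩ : alternatingGroup (Fin p)) ⊓ Subgroup.zpowers β = ⊥ ∧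
      ((Subgroup.zpowers (⟨τ, hτA⟩ : alternatingGroup (Fin p))).subgroupOf
        (Subgroup.normalizer (Subgroup.zpowers (⟨τ, hτA⟩ : alternatingGroup (Fin p))))).Normal :=
  normalizer_eq_semidirect_general p hp τ hcyc hcard hτA
end

section
/- Let k be an algebraically closed field of characteristic p > 0 and 2 ≤ s < p. The polynomial g_s = y^{p+s} − x y^s + 1 ∈ k(x)[y] has no repeated roots for any specialization x = a with a ∈ k: that is, g_s(a, y) and ∂g_s/∂y(a, y) have no common root in k for any a ∈ k. -/
/-!
In characteristic `p` the coefficient `p + s` of the derivative collapses to `s`, so the derivative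
of `y^(p+s) - a y^s + 1` is `s y^(s-1) (y^p - a)`. At a common root `y ≠ 0` (the constant term is
`1`) and `s ≠ 0` in `k`, hence `y^p = a`; but then `y^(p+s) = a y^s` and the polynomial takes the
value `1` at `y`.
-/

open Polynomial

theorem X_pow_add_sub_C_mul_X_pow_add_one_eval_derivative {R : Type*} [CommRing R] (p : ℕ)
    [CharP R p] {s : ℕ} (hs : 0 < s) (a y : R) :
    (derivative (X ^ (p + s) - C a * X ^ s + 1 : R[X])).eval y = s * y ^ (s - 1) * (y ^ p - a) := by
  have hexp : p + s - 1 = p + (s - 1) := by omega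
  simp only [derivative_add, derivative_sub, derivative_one, derivative_X_pow, derivative_C_mul,
    eval_sub, eval_mul, eval_pow, eval_X, eval_C, add_zero, hexp]
  rw [Nat.cast_add, CharP.cast_eq_zero, zero_add]
  ring

theorem X_pow_add_sub_C_mul_X_pow_add_one_eval_of_pow_eq {R : Type*} [CommRing R] (p s : ℕ)
    {a y : R} (h : y ^ p = a) : (X ^ (p + s) - C a * X ^ s + 1 : R[X]).eval y = 1 := by
  simp [pow_add, h]

theorem gs_separable_specializations_general (p s : ℕ) (hs2 : 2 ≤ s) (hsp : s < p)
    (k : Type*) [Field k] [CharP k p] :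
    ∀ a y : k, ¬ (Polynomial.eval y
        ((Polynomial.X ^ (p + s) - Polynomial.C a * Polynomial.X ^ s + 1) : Polynomial k) = 0 ∧
      Polynomial.eval y (Polynomial.derivative
        ((Polynomial.X ^ (p + s) - Polynomial.C a * Polynomial.X ^ s + 1) : Polynomial k)) = 0) := by
  rintro a y ⟨hroot, hderiv⟩
  have hs : (s : k) ≠ 0 := by
    rw [Ne, CharP.cast_eq_zero_iff k p]
    exact fun hdvd => (Nat.le_of_dvd (by omega) hdvd).not_gt hsp
  have hy : y ≠ 0 := by
    rintro rfl
    simp [zero_pow (show p + s ≠ 0 by omega), zero_pow (show s ≠ 0 by omega)] at hroot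
  rw [X_pow_add_sub_C_mul_X_pow_add_one_eval_derivative p (by omega)] at hderiv
  have hya : y ^ p = a := by simpa [hs, hy, sub_eq_zero] using hderiv
  simp [X_pow_add_sub_C_mul_X_pow_add_one_eval_of_pow_eq p s hya] at hroot

/-- for `k` algebraically closed of characteristic `p > 0` and
`2 ≤ s < p`, the specializations of `g_s = y^{p+s} − x y^s + 1` have no repeated
roots: for every `a ∈ k`, the polynomial `g_s(a, y)` and its `y`-derivative have
no common root in `k`. -/
theorem gs_separable_specializations (p s : ℕ) (hp : p.Prime) (hs2 : 2 ≤ s) (hsp : s < p)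
    (k : Type*) [Field k] [IsAlgClosed k] [CharP k p] :
    ∀ a y : k, ¬ (Polynomial.eval y
        ((Polynomial.X ^ (p + s) - Polynomial.C a * Polynomial.X ^ s + 1) : Polynomial k) = 0 ∧
      Polynomial.eval y (Polynomial.derivative
        ((Polynomial.X ^ (p + s) - Polynomial.C a * Polynomial.X ^ s + 1) : Polynomial k)) = 0) :=
  gs_separable_specializations_general p s hs2 hsp k
end

section
/- Let p > 0 be prime, m a positive integer with p ∤ m, and t an integer with 1 < t < p−2. In the polynomial N(z)/(z·ε^{pm}) obtained from f(ε) = ε^{pm} − x·ε^{m(p−t)} + x by substituting ε ↦ ε(z+1), where x = ε^{pm}/(ε^{m(p−t)} − 1), the coefficient of z^0 equals d·m·t·ε^{m(p−t)} times a unit, where d = 1/(ε^{m(p−t)} − 1); consequently its ε-adic valuation is m(p−t). The coefficient of z^{p−1} has ε-adic valuation 0. Hence the Newton polygon of N(z)/z with respect to the ε-adic valuation has vertices (0, m(p−t)), (p−1, 0), (pm−1, 0), and its unique negative slope is −m(p−t)/(p−1). -/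
/-!
In characteristic `p` Lucas' theorem gives `C(pm, n) ≡ [p ∣ n] C(m, n/p)`, and dividing out
`ε^{pm}` turns the coefficients into `b_j = C(pm, j+1) - s C(A, j+1)` with `A = m(p-t)` and
`s = ε^A / (ε^A - 1)`, a series of valuation exactly `A`. Hence `b_0 = -sA = s m t` has valuation
`A` because `A ≡ -mt` and `p ∤ mt`; for `0 < j < p-1` only the second term survives; `b_{p-1}` is
the unit `m` plus a term of valuation `≥ A > 0`; and `b_{pm-1} = 1` since `A < pm`.
-/

open Polynomial HahnSeries

namespace CharP

variable (R : Type*) [AddGroupWithOne R] (p : ℕ) [CharP R p]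

theorem natCast_choose_prime_mul [Fact p.Prime] (m n : ℕ) :
    (((p * m).choose n : ℕ) : R) = if p ∣ n then ((m.choose (n / p) : ℕ) : R) else 0 := by
  have lucas := natCast_eq_natCast' R p
    (Choose.choose_modEq_choose_mod_mul_choose_div_nat (p := p) (n := p * m) (k := n))
  rw [Nat.mul_mod_right, Nat.mul_div_cancel_left m (Fact.out : p.Prime).pos] at lucas
  rw [lucas]
  split_ifs with h
  · simp [Nat.mod_eq_zero_of_dvd h]
  · rw [Nat.choose_eq_zero_of_lt (Nat.pos_of_ne_zero (mt Nat.dvd_of_mod_eq_zero h)),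
      zero_mul, Nat.cast_zero]

theorem natCast_mul_sub_eq_neg {t : ℕ} (ht : t ≤ p) (m : ℕ) :
    ((m * (p - t) : ℕ) : R) = -((m * t : ℕ) : R) := by
  rw [eq_neg_iff_add_eq_zero, ← Nat.cast_add, ← Nat.mul_add, Nat.sub_add_cancel ht,
    cast_eq_zero_iff R p]
  exact dvd_mul_left p m

end CharP

namespace Polynomial

theorem coeff_comp_C_mul_X_add_one {R : Type*} [CommRing R] (a c : ℕ) (x ε : R) (n : ℕ) :
    ((X ^ a - C x * X ^ c + C x).comp (C ε * (X + 1))).coeff n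
      = ε ^ a * a.choose n - x * (ε ^ c * c.choose n) + if n = 0 then x else 0 := by
  simp only [add_comp, sub_comp, mul_comp, pow_comp, X_comp, C_comp, mul_pow, ← C_pow,
    coeff_add, coeff_sub, coeff_C_mul, coeff_C, coeff_X_add_one_pow]

theorem coeff_succ_comp_C_mul_X_add_one_div {K : Type*} [Field K] (a c : ℕ) {ε : K}
    (hε : ε ≠ 0) (n : ℕ) :
    ((X ^ a - C (ε ^ a / (ε ^ c - 1)) * X ^ c + C (ε ^ a / (ε ^ c - 1))).comp
        (C ε * (X + 1))).coeff (n + 1) / ε ^ a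
      = a.choose (n + 1) - ε ^ c / (ε ^ c - 1) * c.choose (n + 1) := by
  rw [coeff_comp_C_mul_X_add_one, if_neg n.succ_ne_zero, add_zero]
  field_simp

end Polynomial

namespace HahnSeries

instance charP {Γ R : Type*} [AddCommMonoid Γ] [PartialOrder Γ] [IsOrderedCancelAddMonoid Γ]
    [Semiring R] (p : ℕ) [CharP R p] : CharP R⟦Γ⟧ p :=
  charP_of_injective_ringHom C_injective p

section Order

variable {Γ R : Type*} [Zero Γ] [LinearOrder Γ] [Zero R]

theorem ne_zero_and_order_eq_of_orderTop_eq {x : R⟦Γ⟧} {g : Γ} (h : x.orderTop = g) :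
    x ≠ 0 ∧ x.order = g := by
  have hx : x ≠ 0 := orderTop_ne_top.1 (h ▸ WithTop.coe_ne_top)
  exact ⟨hx, WithTop.coe_injective ((order_eq_orderTop_of_ne_zero hx).trans h)⟩

theorem eq_zero_or_le_order_of_le_orderTop {x : R⟦Γ⟧} {g : Γ} (h : g ≤ x.orderTop) :
    x = 0 ∨ g ≤ x.order :=
  or_iff_not_imp_left.2 fun hx ↦ by rwa [← WithTop.coe_le_coe, order_eq_orderTop_of_ne_zero hx]

variable [NatCast R]

theorem orderTop_natCast_nonneg (n : ℕ) : 0 ≤ (n : R⟦Γ⟧).orderTop :=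
  orderTop_single_le

theorem orderTop_natCast {n : ℕ} (h : (n : R) ≠ 0) : (n : R⟦Γ⟧).orderTop = 0 :=
  orderTop_single h

end Order

section Mul

variable {Γ R : Type*} [AddCommMonoid Γ] [LinearOrder Γ] [IsOrderedCancelAddMonoid Γ] [Ring R]

theorem le_orderTop_mul_natCast (s : R⟦Γ⟧) (n : ℕ) : s.orderTop ≤ (s * n).orderTop :=
  calc s.orderTop = s.orderTop + 0 := (add_zero _).symm
    _ ≤ s.orderTop + (n : R⟦Γ⟧).orderTop := by gcongr; exact orderTop_natCast_nonneg n
    _ ≤ (s * n).orderTop := orderTop_add_le_mul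

theorem le_orderTop_sub_mul_natCast {x s : R⟦Γ⟧} {g : WithTop Γ} (hx : g ≤ x.orderTop)
    (hs : g ≤ s.orderTop) (n : ℕ) : g ≤ (x - s * n).orderTop :=
  (le_min hx (hs.trans (le_orderTop_mul_natCast s n))).trans min_orderTop_le_orderTop_sub

theorem orderTop_natCast_sub_mul_natCast {n : ℕ} (hn : (n : R) ≠ 0) {s : R⟦Γ⟧}
    (hs : 0 < s.orderTop) (l : ℕ) : ((n : R⟦Γ⟧) - s * l).orderTop = 0 := by
  rw [orderTop_sub ((orderTop_natCast hn).trans_lt (hs.trans_le (le_orderTop_mul_natCast s l))),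
    orderTop_natCast hn]

end Mul

theorem orderTop_div_sub_one {Γ K : Type*} [AddCommGroup Γ] [LinearOrder Γ]
    [IsOrderedAddMonoid Γ] [Field K] {y : K⟦Γ⟧} (hy : 0 < y.orderTop) :
    (y / (y - 1)).orderTop = y.orderTop := by
  have h1 : (y - 1).orderTop = 0 := by
    rw [← neg_sub, orderTop_neg, orderTop_sub ((orderTop_one (Γ := Γ) (R := K)).symm ▸ hy),
      orderTop_one]
  have hne : y - 1 ≠ 0 := orderTop_ne_top.1 (h1 ▸ WithTop.zero_ne_top)
  simpa [h1] using congrArg orderTop (div_mul_cancel₀ y hne)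

end HahnSeries

namespace LaurentSeries

theorem orderTop_single_one_pow {R : Type*} [Semiring R] [Nontrivial R] (n : ℕ) :
    ((single (1 : ℤ) (1 : R)) ^ n).orderTop = n := by
  rw [single_pow, one_pow, orderTop_single one_ne_zero, nsmul_one]
  rfl

theorem orderTop_single_one_pow_div_sub_one {K : Type*} [Field K] {n : ℕ} (hn : 0 < n) :
    ((single (1 : ℤ) (1 : K)) ^ n / ((single (1 : ℤ) (1 : K)) ^ n - 1)).orderTop = n := by
  have h := orderTop_single_one_pow (R := K) n
  rw [orderTop_div_sub_one (h ▸ by exact_mod_cast hn), h]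

end LaurentSeries

theorem newton_polygon_abhyankar_general (p m t : ℕ) (hp : p.Prime) (hm : 0 < m)
    (hpm : ¬ p ∣ m) (ht1 : 1 < t) (ht2 : t < p - 2)
    (k : Type*) [Field k] [CharP k p]
    (ε x : LaurentSeries k)
    (hε : ε = HahnSeries.single (1 : ℤ) (1 : k))
    (hx : x = ε ^ (p * m) / (ε ^ (m * (p - t)) - 1))
    (f N : Polynomial (LaurentSeries k))
    (hf : f = Polynomial.X ^ (p * m)
        - Polynomial.C x * Polynomial.X ^ (m * (p - t)) + Polynomial.C x)
    (hN : N = f.comp (Polynomial.C ε * (Polynomial.X + 1)))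
    (b : ℕ → LaurentSeries k)
    (hb : ∀ j : ℕ, b j = N.coeff (j + 1) / ε ^ (p * m)) :
    (∃ u : LaurentSeries k, u ≠ 0 ∧ u.order = 0 ∧
        b 0 = (ε ^ (m * (p - t)) - 1)⁻¹ * ((m * t : ℕ) : LaurentSeries k)
          * ε ^ (m * (p - t)) * u) ∧
      b 0 ≠ 0 ∧ (b 0).order = (m * (p - t) : ℤ) ∧
      (∀ j : ℕ, 1 ≤ j → j < p - 1 → b j = 0 ∨ (m * (p - t) : ℤ) ≤ (b j).order) ∧
      b (p - 1) ≠ 0 ∧ (b (p - 1)).order = 0 ∧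
      b (p * m - 1) ≠ 0 ∧ (b (p * m - 1)).order = 0 ∧
      (∀ j : ℕ, b j = 0 ∨ 0 ≤ (b j).order) := by
  have : Fact p.Prime := ⟨hp⟩
  have htp : t ≤ p := by omega
  have hA_pos : 0 < m * (p - t) := Nat.mul_pos hm (by omega)
  have hA : ((m * (p - t) : ℕ) : ℤ) = m * (p - t) := by rw [Nat.cast_mul, Nat.cast_sub htp]
  have hm_ne : (m : k) ≠ 0 := (CharP.cast_eq_zero_iff k p m).not.2 hpm
  have hmt_ne : ((m * t : ℕ) : k) ≠ 0 := by
    rw [Ne, CharP.cast_eq_zero_iff k p, hp.dvd_mul]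
    exact not_or.2 ⟨hpm, Nat.not_dvd_of_pos_of_lt (by omega) (by omega)⟩
  set s := ε ^ (m * (p - t)) / (ε ^ (m * (p - t)) - 1) with hs_def
  have hs : s.orderTop = (m * (p - t) : ℕ) := by
    rw [hs_def, hε, LaurentSeries.orderTop_single_one_pow_div_sub_one hA_pos]
  have hbj : ∀ j, b j = (((p * m).choose (j + 1) : ℕ) : LaurentSeries k)
      - s * ((m * (p - t)).choose (j + 1) : ℕ) := fun j ↦ by
    rw [hb, hN, hf, hx]
    exact coeff_succ_comp_C_mul_X_add_one_div _ _ (hε ▸ single_ne_zero one_ne_zero) j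
  have hb0 : b 0 = s * ((m * t : ℕ) : LaurentSeries k) := by
    rw [hbj, CharP.natCast_choose_prime_mul, if_neg hp.not_dvd_one, Nat.choose_one_right,
      CharP.natCast_mul_sub_eq_neg _ p htp]
    ring
  have hb0_ord : (b 0).orderTop = (m * (p - t) : ℕ) := by
    rw [hb0, orderTop_mul, hs, orderTop_natCast hmt_ne, add_zero]
  have hbp_ord : (b (p - 1)).orderTop = 0 := by
    rw [hbj, Nat.sub_add_cancel hp.one_le, CharP.natCast_choose_prime_mul, if_pos dvd_rfl,
      Nat.div_self hp.pos, Nat.choose_one_right]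
    exact orderTop_natCast_sub_mul_natCast hm_ne (hs ▸ by exact_mod_cast hA_pos) _
  have hbpm : b (p * m - 1) = 1 := by
    rw [hbj, Nat.sub_add_cancel (Nat.mul_pos hp.pos hm), Nat.choose_self,
      Nat.choose_eq_zero_of_lt (by nlinarith [Nat.sub_lt hp.pos (by omega : 0 < t)])]
    simp
  refine ⟨⟨1, one_ne_zero, order_one, by rw [hb0, mul_one, hs_def]; ring⟩,
    (ne_zero_and_order_eq_of_orderTop_eq hb0_ord).1,
    (ne_zero_and_order_eq_of_orderTop_eq hb0_ord).2.trans hA, fun j _ hj ↦ ?_,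
    (ne_zero_and_order_eq_of_orderTop_eq hbp_ord).1,
    (ne_zero_and_order_eq_of_orderTop_eq hbp_ord).2,
    by rw [hbpm]; exact one_ne_zero, by rw [hbpm, order_one], fun j ↦ ?_⟩
  · rw [← hA]
    refine eq_zero_or_le_order_of_le_orderTop ?_
    have hj_ndvd : ¬ p ∣ j + 1 := Nat.not_dvd_of_pos_of_lt j.succ_pos (by omega)
    rw [hbj, CharP.natCast_choose_prime_mul, if_neg hj_ndvd]
    exact le_orderTop_sub_mul_natCast (by simp) hs.ge _
  · refine eq_zero_or_le_order_of_le_orderTop ?_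
    rw [hbj]
    exact le_orderTop_sub_mul_natCast (orderTop_natCast_nonneg _) (hs ▸ by positivity) _

/-- Newton polygon computation for Abhyankar's cover.  Work in
`K = k((ε))` with the `ε`-adic valuation (`HahnSeries.order`).  Let
`x = ε^{pm}/(ε^{m(p−t)} − 1)`, `f(T) = T^{pm} − x T^{m(p−t)} + x` (so `f(ε)=0`),
`N(z) = f(ε(z+1))` and `b_j` the coefficients of `N(z)/(z ε^{pm})`.  Then `b_0`
is `d·m·t·ε^{m(p−t)}` times a unit (where `d = 1/(ε^{m(p−t)} − 1)`), so has
valuation `m(p−t)`; the coefficients `b_j` for `1 ≤ j < p−1` have valuation at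
least `m(p−t)`; `b_{p−1}` and `b_{pm−1}` have valuation `0`; and all `b_j` have
valuation `≥ 0`.  Hence the Newton polygon of `N(z)/z` has vertices
`(0, m(p−t))`, `(p−1, 0)`, `(pm−1, 0)` and unique negative slope
`−m(p−t)/(p−1)`. -/
theorem newton_polygon_abhyankar (p m t : ℕ) (hp : p.Prime) (hm : 0 < m)
    (hpm : ¬ p ∣ m) (ht1 : 1 < t) (ht2 : t < p - 2)
    (k : Type*) [Field k] [IsAlgClosed k] [CharP k p]
    (ε x : LaurentSeries k)
    (hε : ε = HahnSeries.single (1 : ℤ) (1 : k))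
    (hx : x = ε ^ (p * m) / (ε ^ (m * (p - t)) - 1))
    (f N : Polynomial (LaurentSeries k))
    (hf : f = Polynomial.X ^ (p * m)
        - Polynomial.C x * Polynomial.X ^ (m * (p - t)) + Polynomial.C x)
    (hN : N = f.comp (Polynomial.C ε * (Polynomial.X + 1)))
    (b : ℕ → LaurentSeries k)
    (hb : ∀ j : ℕ, b j = N.coeff (j + 1) / ε ^ (p * m)) :
    (∃ u : LaurentSeries k, u ≠ 0 ∧ u.order = 0 ∧
        b 0 = (ε ^ (m * (p - t)) - 1)⁻¹ * ((m * t : ℕ) : LaurentSeries k)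
          * ε ^ (m * (p - t)) * u) ∧
      b 0 ≠ 0 ∧ (b 0).order = (m * (p - t) : ℤ) ∧
      (∀ j : ℕ, 1 ≤ j → j < p - 1 → b j = 0 ∨ (m * (p - t) : ℤ) ≤ (b j).order) ∧
      b (p - 1) ≠ 0 ∧ (b (p - 1)).order = 0 ∧
      b (p * m - 1) ≠ 0 ∧ (b (p * m - 1)).order = 0 ∧
      (∀ j : ℕ, b j = 0 ∨ 0 ≤ (b j).order) :=
  newton_polygon_abhyankar_general p m t hp hm hpm ht1 ht2 k ε x hε hx f N hf hN b hb
end
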